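/- arXiv:math-ph/0608029 — 2 statements merged into one kernel-verified Lean document; each statement's English description precedes it below -/
import Mathlib

section
/- Assume w is exponentially bounded and dom z is not all of R^2. Define T : R -> R by T(t) = - limsup_{|k| -> infinity, k in N^2} (2 log w(k) + t(k_1 - k_2))/(k_1 + k_2), where the limsup over |k| -> infinity means inf over n of the sup over k in N^2 with |k| >= n. Then T is real-valued (finite everywhere), and for every mu = (mu_1, mu_2) in R^2: if mu_1 + mu_2 < T(mu_1 - mu_2) then mu lies in D_mu (in fact in the interior of dom z), while if mu_1 + mu_2 > T(mu_1 - mu_2) then z(mu) = infinity. Consequently the boundary of dom z equals {mu in R^2 : mu_1 + mu_2 = T(mu_1 - mu_2)}. -/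
open Real Set Filter Topology

noncomputable section

/-- Euclidean norm `|k|` of a pair of naturals. -/
def knorm (k : ℕ × ℕ) : ℝ := Real.sqrt ((k.1 : ℝ) ^ 2 + (k.2 : ℝ) ^ 2)

/-- Dot product `μ·k` of a chemical potential with an occupation vector. -/
def dotNat (μ : ℝ × ℝ) (k : ℕ × ℕ) : ℝ := μ.1 * k.1 + μ.2 * k.2

/-- Summand `w(k) exp(μ·k)` of the grand-canonical partition function. -/
def zsummand (w : ℕ × ℕ → ℝ) (μ : ℝ × ℝ) (k : ℕ × ℕ) : ℝ := w k * Real.exp (dotNat μ k)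

/-- `dom z`: the set of `μ` where `z(μ) = ∑_k w(k) exp(μ·k)` is finite. -/
def domz (w : ℕ × ℕ → ℝ) : Set (ℝ × ℝ) := {μ | Summable (zsummand w μ)}

/-- `D_μ`: the set of `μ` where `∑_k k_i w(k) exp(μ·k)` is finite for `i = 1,2`. -/
def Dmu (w : ℕ × ℕ → ℝ) : Set (ℝ × ℝ) :=
  {μ | Summable (fun k : ℕ × ℕ => (k.1 : ℝ) * zsummand w μ k) ∧
       Summable (fun k : ℕ × ℕ => (k.2 : ℝ) * zsummand w μ k)}

/-- `w` is exponentially bounded: `w(k) ≤ ξ^|k|` for some `ξ > 0`. -/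
def ExpBounded (w : ℕ × ℕ → ℝ) : Prop := ∃ ξ : ℝ, 0 < ξ ∧ ∀ k : ℕ × ℕ, w k ≤ ξ ^ knorm k

/-- The term whose `limsup` over `|k| → ∞` describes the boundary of `dom z`
in rotated coordinates. -/
def limsupTerm (w : ℕ × ℕ → ℝ) (t : ℝ) (k : ℕ × ℕ) : ℝ :=
  (2 * Real.log (w k) + t * ((k.1 : ℝ) - (k.2 : ℝ))) / ((k.1 : ℝ) + (k.2 : ℝ))

/-- The `limsup` over `|k| → ∞` (inf over `n` of sup over `|k| ≥ n`), valued in `EReal`. -/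
def limsupE (w : ℕ × ℕ → ℝ) (t : ℝ) : EReal :=
  ⨅ n : ℕ, ⨆ k : {k : ℕ × ℕ // (n : ℝ) ≤ knorm k}, ((limsupTerm w t k.1 : ℝ) : EReal)

/-! Write `s = μ₁ + μ₂` and `t = μ₁ - μ₂`. Then
`w(k) e^{μ·k} = exp ((k₁ + k₂) (limsupTerm w t k + s) / 2)`, so the terms of `z(μ)` decay
exponentially in `k₁ + k₂` when `limsupE w t < -s` and do not tend to zero when
`limsupE w t > -s`. Exponential boundedness bounds `limsupE w t` from above. Since
`t ↦ limsupTerm w t k` is `1`-Lipschitz uniformly in `k`, `limsupE w t = -∞` for one `t` would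
force it for every `t`, hence `dom z = ℝ²`. So `T = -limsupE w` is real and `1`-Lipschitz, and
`dom z` lies between the open regions below and above its graph. -/

lemma fst_le_knorm (k : ℕ × ℕ) : (k.1 : ℝ) ≤ knorm k :=
  Real.le_sqrt_of_sq_le (le_add_of_nonneg_right (by positivity))

lemma snd_le_knorm (k : ℕ × ℕ) : (k.2 : ℝ) ≤ knorm k :=
  Real.le_sqrt_of_sq_le (le_add_of_nonneg_left (by positivity))

lemma knorm_le_add (k : ℕ × ℕ) : knorm k ≤ (k.1 : ℝ) + k.2 :=
  Real.sqrt_le_iff.mpr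
    ⟨by positivity, by nlinarith [mul_nonneg (Nat.cast_nonneg (α := ℝ) k.1) (Nat.cast_nonneg k.2)]⟩

lemma mul_sub_le_abs_mul_add {a b : ℝ} (ha : 0 ≤ a) (hb : 0 ≤ b) (t : ℝ) :
    t * (a - b) ≤ |t| * (a + b) :=
  (le_abs_self _).trans <| (abs_mul _ _).trans_le <| by
    gcongr; exact abs_le.mpr ⟨by linarith, by linarith⟩

lemma hasBasis_cofinite_knorm :
    (cofinite : Filter (ℕ × ℕ)).HasBasis (fun _ : ℕ => True)
      (fun n => {k | (n : ℝ) ≤ knorm k}) := by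
  refine ⟨fun s => ⟨fun hs => ?_, fun ⟨n, _, hn⟩ => ?_⟩⟩
  · obtain ⟨B, hB⟩ := ((mem_cofinite.mp hs).image knorm).bddAbove
    obtain ⟨n, hn⟩ := exists_nat_gt B
    refine ⟨n, trivial, fun k hk => not_not.mp fun hks => ?_⟩
    exact (hn.trans_le hk).not_ge (hB ⟨k, hks, rfl⟩)
  · refine mem_cofinite.mpr (((Set.finite_Iio n).prod (Set.finite_Iio n)).subset fun k hk => ?_)
    have hlt : knorm k < n := not_le.mp fun h => hk (hn h)
    exact ⟨by exact_mod_cast (fst_le_knorm k).trans_lt hlt,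
      by exact_mod_cast (snd_le_knorm k).trans_lt hlt⟩

section Terms

variable {w : ℕ × ℕ → ℝ}

lemma zsummand_eq_exp_limsupTerm (μ : ℝ × ℝ) {k : ℕ × ℕ} (hwk : 0 < w k)
    (hk : (k.1 : ℝ) + k.2 ≠ 0) :
    zsummand w μ k =
      Real.exp ((limsupTerm w (μ.1 - μ.2) k + (μ.1 + μ.2)) * ((k.1 : ℝ) + k.2) / 2) := by
  rw [zsummand, limsupTerm, dotNat]
  conv_lhs => rw [← Real.exp_log hwk, ← Real.exp_add]
  congr 1
  field_simp
  ring

lemma limsupTerm_le_add_abs_sub (w : ℕ × ℕ → ℝ) (t t' : ℝ) (k : ℕ × ℕ) :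
    limsupTerm w t' k ≤ limsupTerm w t k + |t' - t| := by
  rcases eq_or_lt_of_le (by positivity : (0 : ℝ) ≤ k.1 + k.2) with hk | hk
  · simp only [limsupTerm, ← hk, div_zero, zero_add, abs_nonneg]
  have hmul := mul_sub_le_abs_mul_add (Nat.cast_nonneg (α := ℝ) k.1) (Nat.cast_nonneg k.2) (t' - t)
  rw [limsupTerm, limsupTerm, div_add' _ _ _ hk.ne', div_le_div_iff_of_pos_right hk]
  linarith

lemma limsupTerm_le_of_le_rpow {ξ : ℝ} (hξ : 0 < ξ) (t : ℝ) {k : ℕ × ℕ} (hwk : 0 < w k)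
    (hbound : w k ≤ ξ ^ knorm k) :
    limsupTerm w t k ≤ 2 * |Real.log ξ| + |t| := by
  rcases eq_or_lt_of_le (by positivity : (0 : ℝ) ≤ k.1 + k.2) with hk | hk
  · simp only [limsupTerm, ← hk, div_zero]
    positivity
  have hlog : Real.log (w k) ≤ ((k.1 : ℝ) + k.2) * |Real.log ξ| :=
    calc Real.log (w k) ≤ knorm k * Real.log ξ := by
          simpa [Real.log_rpow hξ] using Real.log_le_log hwk hbound
      _ ≤ knorm k * |Real.log ξ| := by gcongr; exacts [Real.sqrt_nonneg _, le_abs_self _]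
      _ ≤ ((k.1 : ℝ) + k.2) * |Real.log ξ| := by gcongr; exact knorm_le_add k
  have hmul := mul_sub_le_abs_mul_add (Nat.cast_nonneg (α := ℝ) k.1) (Nat.cast_nonneg k.2) t
  rw [limsupTerm, div_le_iff₀ hk]
  linarith

end Terms

section Summability

lemma summable_succ_mul_exp_neg {ε : ℝ} (hε : 0 < ε) :
    Summable fun n : ℕ => ((n : ℝ) + 1) * Real.exp (-ε * n) := by
  have hr : ‖Real.exp (-ε)‖ < 1 := by
    rw [Real.norm_eq_abs, abs_of_pos (Real.exp_pos _)]
    exact Real.exp_lt_one_iff.mpr (neg_lt_zero.mpr hε)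
  have hgeo := summable_geometric_of_norm_lt_one hr
  have hpow := summable_pow_mul_geometric_of_norm_lt_one 1 hr
  simp only [pow_one] at hpow
  refine (hpow.add hgeo).congr fun n => ?_
  rw [mul_comm (-ε), Real.exp_nat_mul]
  ring

variable {w : ℕ × ℕ → ℝ}

lemma mem_Dmu_and_domz_of_eventually_le_exp (hw : ∀ k, 0 < w k) {μ : ℝ × ℝ} {ε : ℝ}
    (hε : 0 < ε) (h : ∀ᶠ k in cofinite, zsummand w μ k ≤ Real.exp (-ε * ((k.1 : ℝ) + k.2))) :
    μ ∈ Dmu w ∧ μ ∈ domz w := by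
  set g : ℕ → ℝ := fun n => ((n : ℝ) + 1) * Real.exp (-ε * n)
  have hg : Summable fun k : ℕ × ℕ => g k.1 * g k.2 :=
    (summable_succ_mul_exp_neg hε).mul_of_nonneg (summable_succ_mul_exp_neg hε)
      (fun _ => by positivity) (fun _ => by positivity)
  have hz : ∀ k, 0 ≤ zsummand w μ k := fun k => (mul_pos (hw k) (Real.exp_pos _)).le
  have hdom : ∀ (c : ℕ × ℕ → ℝ), (∀ k, 0 ≤ c k ∧ c k ≤ ((k.1 : ℝ) + 1) * ((k.2 : ℝ) + 1)) →
      Summable fun k => c k * zsummand w μ k := by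
    intro c hc
    refine hg.of_norm_bounded_eventually (h.mono fun k hk => ?_)
    rw [Real.norm_of_nonneg (mul_nonneg (hc k).1 (hz k))]
    calc c k * zsummand w μ k
        ≤ ((k.1 : ℝ) + 1) * ((k.2 : ℝ) + 1) * Real.exp (-ε * (k.1 + k.2)) :=
          mul_le_mul (hc k).2 hk (hz k) (by positivity)
      _ = g k.1 * g k.2 := by
          simp only [g, mul_add, Real.exp_add]
          ring
  have hle : ∀ k : ℕ × ℕ, 1 + (k.1 : ℝ) + k.2 ≤ ((k.1 : ℝ) + 1) * ((k.2 : ℝ) + 1) := fun k => by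
    nlinarith [mul_nonneg (Nat.cast_nonneg (α := ℝ) k.1) (Nat.cast_nonneg (α := ℝ) k.2)]
  have h1 := hdom (fun k => k.1) fun k =>
    ⟨k.1.cast_nonneg, by linarith [hle k, k.2.cast_nonneg (α := ℝ)]⟩
  have h2 := hdom (fun k => k.2) fun k =>
    ⟨k.2.cast_nonneg, by linarith [hle k, k.1.cast_nonneg (α := ℝ)]⟩
  have h0 := hdom (fun _ => 1) fun k =>
    ⟨zero_le_one, by linarith [hle k, k.1.cast_nonneg (α := ℝ), k.2.cast_nonneg (α := ℝ)]⟩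
  exact ⟨⟨h1, h2⟩, show Summable (zsummand w μ) by simpa only [one_mul] using h0⟩

end Summability

section Limsup

lemma limsupE_eq_limsup (w : ℕ × ℕ → ℝ) (t : ℝ) :
    limsupE w t = limsup (fun k => (limsupTerm w t k : EReal)) cofinite := by
  simp [hasBasis_cofinite_knorm.limsup_eq_iInf_iSup, limsupE, iSup_subtype']

lemma eventually_cofinite_add_pos : ∀ᶠ k : ℕ × ℕ in cofinite, 0 < (k.1 : ℝ) + k.2 :=
  (eventually_cofinite_ne 0).mono fun k hk => by
    have : 0 < k.1 + k.2 := by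
      by_contra h
      exact hk (Prod.ext (by simp; omega) (by simp; omega))
    exact_mod_cast this

variable {w : ℕ × ℕ → ℝ}

lemma limsupE_ne_top (hw : ∀ k, 0 < w k) (hexp : ExpBounded w) (t : ℝ) : limsupE w t ≠ ⊤ := by
  obtain ⟨ξ, hξ, hbound⟩ := hexp
  refine ne_top_of_le_ne_top (EReal.coe_ne_top (2 * |Real.log ξ| + |t|)) ?_
  rw [limsupE_eq_limsup]
  exact limsup_le_of_le (by isBoundedDefault) (Eventually.of_forall fun k =>
    EReal.coe_le_coe_iff.mpr (limsupTerm_le_of_le_rpow hξ t (hw k) (hbound k)))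

lemma limsupE_le_add_abs_sub (w : ℕ × ℕ → ℝ) (t t' : ℝ) :
    limsupE w t' ≤ limsupE w t + (|t' - t| : ℝ) := by
  simp only [limsupE_eq_limsup]
  calc limsup (fun k => (limsupTerm w t' k : EReal)) cofinite
      ≤ limsup ((fun k => (limsupTerm w t k : EReal)) + fun _ => ((|t' - t| : ℝ) : EReal))
          cofinite :=
        limsup_le_limsup (Eventually.of_forall fun k => by
          change (limsupTerm w t' k : EReal) ≤ limsupTerm w t k + ((|t' - t| : ℝ) : EReal)
          exact_mod_cast limsupTerm_le_add_abs_sub w t t' k)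
    _ ≤ _ := (EReal.limsup_add_le (.inr (by simp)) (.inr (by simp))).trans (by simp)

lemma mem_Dmu_and_domz_of_limsupE_lt (hw : ∀ k, 0 < w k) {μ : ℝ × ℝ}
    (h : limsupE w (μ.1 - μ.2) < ((-(μ.1 + μ.2) : ℝ) : EReal)) :
    μ ∈ Dmu w ∧ μ ∈ domz w := by
  obtain ⟨c, hlim, hc⟩ := EReal.lt_iff_exists_real_btwn.mp h
  have hc : c + (μ.1 + μ.2) < 0 := by linarith [EReal.coe_lt_coe_iff.mp hc]
  rw [limsupE_eq_limsup] at hlim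
  refine mem_Dmu_and_domz_of_eventually_le_exp hw (ε := -(c + (μ.1 + μ.2)) / 2) (by linarith) ?_
  filter_upwards [eventually_lt_of_limsup_lt hlim, eventually_cofinite_add_pos] with k hk hpos
  rw [zsummand_eq_exp_limsupTerm μ (hw k) hpos.ne']
  gcongr Real.exp ?_
  have hk : limsupTerm w (μ.1 - μ.2) k < c := EReal.coe_lt_coe_iff.mp hk
  nlinarith

lemma not_summable_of_lt_limsupE (hw : ∀ k, 0 < w k) {μ : ℝ × ℝ}
    (h : ((-(μ.1 + μ.2) : ℝ) : EReal) < limsupE w (μ.1 - μ.2)) :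
    ¬ Summable (zsummand w μ) := by
  intro hsum
  rw [limsupE_eq_limsup] at h
  have hsmall : ∀ᶠ k in cofinite, zsummand w μ k < 1 :=
    hsum.tendsto_cofinite_zero.eventually (gt_mem_nhds one_pos)
  obtain ⟨k, hk, hlt, hpos⟩ :=
    ((frequently_lt_of_lt_limsup (by isBoundedDefault) h).and_eventually
      (hsmall.and eventually_cofinite_add_pos)).exists
  have hk : -(μ.1 + μ.2) < limsupTerm w (μ.1 - μ.2) k := EReal.coe_lt_coe_iff.mp hk
  rw [zsummand_eq_exp_limsupTerm μ (hw k) hpos.ne', Real.exp_lt_one_iff] at hlt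
  nlinarith

lemma limsupE_ne_bot (hw : ∀ k, 0 < w k) (hne : domz w ≠ Set.univ) (t : ℝ) :
    limsupE w t ≠ ⊥ := by
  intro hbot
  refine hne (Set.eq_univ_of_forall fun μ => (mem_Dmu_and_domz_of_limsupE_lt hw ?_).2)
  calc limsupE w (μ.1 - μ.2) ≤ limsupE w t + (|μ.1 - μ.2 - t| : ℝ) :=
        limsupE_le_add_abs_sub w t _
    _ = ⊥ := by rw [hbot, EReal.bot_add]
    _ < _ := EReal.bot_lt_coe _

lemma lipschitzWith_toReal_limsupE (hw : ∀ k, 0 < w k) (hexp : ExpBounded w)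
    (hne : domz w ≠ Set.univ) : LipschitzWith 1 fun t => (limsupE w t).toReal := by
  refine LipschitzWith.of_le_add fun t' t => ?_
  have h := limsupE_le_add_abs_sub w t t'
  rw [← EReal.coe_toReal (limsupE_ne_top hw hexp t) (limsupE_ne_bot hw hne t),
    ← EReal.coe_toReal (limsupE_ne_top hw hexp t') (limsupE_ne_bot hw hne t')] at h
  rw [Real.dist_eq]
  exact_mod_cast h

end Limsup

section Graph

variable {T : ℝ → ℝ} {A : Set (ℝ × ℝ)}

lemma subset_interior_of_forall_lt_mem (hT : Continuous T)
    (hbelow : ∀ μ : ℝ × ℝ, μ.1 + μ.2 < T (μ.1 - μ.2) → μ ∈ A) :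
    {μ : ℝ × ℝ | μ.1 + μ.2 < T (μ.1 - μ.2)} ⊆ interior A :=
  interior_maximal hbelow (isOpen_lt (by fun_prop) (by fun_prop))

/-- Moving along the diagonal direction `(1, 1)` changes `μ₁ + μ₂` but not `μ₁ - μ₂`, so every
point of the graph is approached from both sides. -/
lemma frontier_eq_graph (hT : Continuous T)
    (hbelow : ∀ μ : ℝ × ℝ, μ.1 + μ.2 < T (μ.1 - μ.2) → μ ∈ A)
    (habove : ∀ μ : ℝ × ℝ, T (μ.1 - μ.2) < μ.1 + μ.2 → μ ∉ A) :
    frontier A = {μ : ℝ × ℝ | μ.1 + μ.2 = T (μ.1 - μ.2)} := by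
  have hint := subset_interior_of_forall_lt_mem hT hbelow
  have hext : {μ : ℝ × ℝ | T (μ.1 - μ.2) < μ.1 + μ.2} ⊆ (closure A)ᶜ :=
    interior_compl (s := A) ▸
    interior_maximal habove (isOpen_lt (by fun_prop) (by fun_prop))
  ext μ
  rw [frontier_eq_closure_inter_closure, Set.mem_inter_iff, Set.mem_ofPred_eq]
  constructor
  · rintro ⟨hA, hAc⟩
    rcases lt_trichotomy (μ.1 + μ.2) (T (μ.1 - μ.2)) with hlt | heq | hgt
    · rw [closure_compl] at hAc
      exact absurd (hint hlt) hAc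
    · exact heq
    · exact absurd hA (hext hgt)
  · intro heq
    set γ : ℝ → ℝ × ℝ := fun r => (μ.1 + r, μ.2 + r)
    have hγ : Tendsto γ (𝓝 0) (𝓝 μ) := by
      simpa [γ] using ((show Continuous γ by fun_prop).tendsto 0)
    have hγ_sub : ∀ r, (γ r).1 - (γ r).2 = μ.1 - μ.2 := fun r => by simp [γ]
    have hγ_add : ∀ r, (γ r).1 + (γ r).2 = μ.1 + μ.2 + 2 * r := fun r => by simp [γ]; ring
    refine ⟨mem_closure_of_tendsto (hγ.mono_left (nhdsWithin_le_nhds (s := Set.Iio 0))) ?_,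
      mem_closure_of_tendsto (hγ.mono_left (nhdsWithin_le_nhds (s := Set.Ioi 0))) ?_⟩
    · filter_upwards [self_mem_nhdsWithin] with r (hr : r < 0)
      exact hbelow _ (by rw [hγ_sub, hγ_add]; linarith)
    · filter_upwards [self_mem_nhdsWithin] with r (hr : 0 < r)
      exact habove _ (by rw [hγ_sub, hγ_add]; linarith)

end Graph

/-- If `w` is exponentially bounded and `dom z ≠ ℝ²`, the boundary of
`dom z` is the graph (in rotated variables) of the real-valued function
`T(t) = -limsup_{|k|→∞} (2 log w(k) + t(k₁-k₂))/(k₁+k₂)`: strictly below it one is in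
`D_μ` (indeed in the interior of `dom z`), strictly above it `z = ∞`. -/
theorem statement3 (w : ℕ × ℕ → ℝ) (hw : ∀ k, 0 < w k) (hexp : ExpBounded w)
    (hne : domz w ≠ Set.univ) :
    ∃ T : ℝ → ℝ,
      (∀ t : ℝ, (T t : EReal) = - limsupE w t) ∧
      (∀ μ : ℝ × ℝ, μ.1 + μ.2 < T (μ.1 - μ.2) → μ ∈ Dmu w ∧ μ ∈ interior (domz w)) ∧
      (∀ μ : ℝ × ℝ, T (μ.1 - μ.2) < μ.1 + μ.2 → ¬ Summable (zsummand w μ)) ∧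
      frontier (domz w) = {μ : ℝ × ℝ | μ.1 + μ.2 = T (μ.1 - μ.2)} := by
  set ℓ : ℝ → ℝ := fun t => (limsupE w t).toReal
  have hℓ (t : ℝ) : (ℓ t : EReal) = limsupE w t :=
    EReal.coe_toReal (limsupE_ne_top hw hexp t) (limsupE_ne_bot hw hne t)
  have hcont : Continuous fun t => -ℓ t :=
    (lipschitzWith_toReal_limsupE hw hexp hne).continuous.neg
  have hbelow (μ : ℝ × ℝ) (hμ : μ.1 + μ.2 < -ℓ (μ.1 - μ.2)) : μ ∈ Dmu w ∧ μ ∈ domz w :=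
    mem_Dmu_and_domz_of_limsupE_lt hw (by rw [← hℓ]; exact_mod_cast (by linarith))
  have habove (μ : ℝ × ℝ) (hμ : -ℓ (μ.1 - μ.2) < μ.1 + μ.2) : ¬ Summable (zsummand w μ) :=
    not_summable_of_lt_limsupE hw (by rw [← hℓ]; exact_mod_cast (by linarith))
  refine ⟨fun t => -ℓ t, fun t => by rw [EReal.coe_neg, hℓ], fun μ hμ => ⟨(hbelow μ hμ).1, ?_⟩,
    habove, frontier_eq_graph hcont (fun μ hμ => (hbelow μ hμ).2) habove⟩
  exact subset_interior_of_forall_lt_mem hcont (fun μ hμ => (hbelow μ hμ).2) hμ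
end
end

section
/- Suppose (a, mu_2) lies in D_mu for some a in R. Then the following limits as mu_1 -> -infinity exist: z(mu_1, mu_2) converges to sum over k_2 in N of w(0,k_2) exp(mu_2 k_2), which is finite and positive; R_1(mu_1, mu_2) converges to 0; and R_2(mu_1, mu_2) converges to (sum over k_2 in N of k_2 w(0,k_2) exp(mu_2 k_2)) / (sum over k_2 in N of w(0,k_2) exp(mu_2 k_2)). -/
/-!
Since `w(k) e^{μ·k} = e^{μ₁ k₁} · w(k) e^{μ₂ k₂}`, as `μ₁ → -∞` each term tends to its value on
the line `k₁ = 0` and to `0` off it, and for `μ₁ ≤ a` it is dominated by the term at `(a, μ₂)`.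
The sums `∑ c(k) w(k) e^{μ·k}` with `c = 1, k₁, k₂` are finite at `(a, μ₂)` (for `c = 1` because
`1 ≤ k₁ + k₂` off the origin), so dominated convergence gives the limits of `z` and of the
numerators of `R₁ = ∑ k₁ w e^{μ·k} / z`, `R₂`; the limit of `z` is positive, so the quotients converge.
-/

open Real Set Filter Topology

noncomputable section

/-- The grand-canonical partition function `z(μ)`. -/
def zfun (w : ℕ × ℕ → ℝ) (μ : ℝ × ℝ) : ℝ := ∑' k : ℕ × ℕ, zsummand w μ k

/-- The pressure `p(μ) = log z(μ)`. -/
def press (w : ℕ × ℕ → ℝ) (μ : ℝ × ℝ) : ℝ := Real.log (zfun w μ)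

/-- The single-site grand-canonical mass function `ν¹_μ(k) = w(k) exp(μ·k)/z(μ)`. -/
def nu1 (w : ℕ × ℕ → ℝ) (μ : ℝ × ℝ) (k : ℕ × ℕ) : ℝ := zsummand w μ k / zfun w μ

/-- Density of the first species `R₁(μ)`. -/
def R1 (w : ℕ × ℕ → ℝ) (μ : ℝ × ℝ) : ℝ := ∑' k : ℕ × ℕ, (k.1 : ℝ) * nu1 w μ k

/-- Density of the second species `R₂(μ)`. -/
def R2 (w : ℕ × ℕ → ℝ) (μ : ℝ × ℝ) : ℝ := ∑' k : ℕ × ℕ, (k.2 : ℝ) * nu1 w μ k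

/-- The density map `R(μ) = (R₁(μ), R₂(μ))`. -/
def Rmap (w : ℕ × ℕ → ℝ) (μ : ℝ × ℝ) : ℝ × ℝ := (R1 w μ, R2 w μ)

/-- Dot product of two real vectors. -/
def dotR (a b : ℝ × ℝ) : ℝ := a.1 * b.1 + a.2 * b.2

lemma summable_of_summable_natCast_mul {α : Type*} {f : α → ℝ} {n : α → ℕ}
    (hf : ∀ k, 0 ≤ f k) (hn : {k | n k = 0}.Finite) (h : Summable fun k => (n k : ℝ) * f k) :
    Summable f := by
  refine h.of_norm_bounded_eventually ?_
  filter_upwards [hn.compl_mem_cofinite] with k hk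
  have hk1 : (1 : ℝ) ≤ n k := by exact_mod_cast Nat.one_le_iff_ne_zero.mpr hk
  rw [Real.norm_of_nonneg (hf k)]
  nlinarith [hf k]

lemma tsum_ite_fst_eq {α β M : Type*} [AddCommMonoid M] [TopologicalSpace M] [DecidableEq α]
    (a : α) (f : α × β → M) :
    ∑' k : α × β, (if k.1 = a then f k else 0) = ∑' b : β, f (a, b) := by
  rw [← (Prod.mk_right_injective a).tsum_eq]
  · simp
  · rintro ⟨x, b⟩ hk
    by_cases hx : x = a
    · exact ⟨b, by simp [hx]⟩
    · simp [hx] at hk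

lemma tendsto_exp_mul_natCast_atBot (n : ℕ) :
    Tendsto (fun t : ℝ => exp (t * n)) atBot (𝓝 (if n = 0 then 1 else 0)) := by
  rcases Nat.eq_zero_or_pos n with rfl | hn
  · simp
  · simpa [hn.ne'] using tendsto_id.atBot_mul_const (Nat.cast_pos.mpr hn)

section zsummand

variable {w : ℕ × ℕ → ℝ}

lemma zsummand_eq_exp_mul (w : ℕ × ℕ → ℝ) (t μ2 : ℝ) (k : ℕ × ℕ) :
    zsummand w (t, μ2) k = exp (t * k.1) * (w k * exp (μ2 * k.2)) := by
  simp only [zsummand, dotNat, exp_add]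
  ring

lemma zsummand_nonneg (hw : ∀ k, 0 ≤ w k) (μ : ℝ × ℝ) (k : ℕ × ℕ) : 0 ≤ zsummand w μ k :=
  mul_nonneg (hw k) (exp_pos _).le

lemma zsummand_le_of_le (hw : ∀ k, 0 ≤ w k) {t a : ℝ} (hta : t ≤ a) (μ2 : ℝ) (k : ℕ × ℕ) :
    zsummand w (t, μ2) k ≤ zsummand w (a, μ2) k := by
  rw [zsummand_eq_exp_mul, zsummand_eq_exp_mul]
  have := mul_nonneg (hw k) (exp_pos (μ2 * k.2)).le
  gcongr

lemma summable_zsummand_of_mem_Dmu (hw : ∀ k, 0 ≤ w k) {μ : ℝ × ℝ} (h : μ ∈ Dmu w) :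
    Summable (zsummand w μ) := by
  refine summable_of_summable_natCast_mul (n := fun k => k.1 + k.2) (zsummand_nonneg hw μ) ?_ ?_
  · refine (Set.finite_singleton ((0, 0) : ℕ × ℕ)).subset ?_
    rintro ⟨k1, k2⟩ hk
    obtain ⟨rfl, rfl⟩ := Nat.add_eq_zero_iff.mp hk
    rfl
  · simpa only [Nat.cast_add, add_mul] using h.1.add h.2

lemma tsum_mul_nu1 (w : ℕ × ℕ → ℝ) (μ : ℝ × ℝ) (c : ℕ × ℕ → ℝ) :
    ∑' k, c k * nu1 w μ k = (∑' k, c k * zsummand w μ k) / zfun w μ := by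
  simp only [nu1, ← mul_div_assoc, tsum_div_const]

lemma tendsto_tsum_mul_zsummand_atBot (hw : ∀ k, 0 ≤ w k) {a μ2 : ℝ} {c : ℕ × ℕ → ℝ}
    (hc : ∀ k, 0 ≤ c k) (hs : Summable fun k => c k * zsummand w (a, μ2) k) :
    Tendsto (fun t : ℝ => ∑' k, c k * zsummand w (t, μ2) k) atBot
      (𝓝 (∑' j : ℕ, c (0, j) * (w (0, j) * exp (μ2 * j)))) := by
  have hlim : ∀ k : ℕ × ℕ, Tendsto (fun t : ℝ => c k * zsummand w (t, μ2) k) atBot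
      (𝓝 (if k.1 = 0 then c k * (w k * exp (μ2 * k.2)) else 0)) := by
    intro k
    simp only [zsummand_eq_exp_mul]
    convert ((tendsto_exp_mul_natCast_atBot k.1).mul_const _).const_mul (c k) using 2
    split_ifs <;> simp
  have hdom : ∀ᶠ t : ℝ in atBot, ∀ k, ‖c k * zsummand w (t, μ2) k‖ ≤ c k * zsummand w (a, μ2) k := by
    filter_upwards [eventually_le_atBot a] with t hta k
    rw [Real.norm_of_nonneg (mul_nonneg (hc k) (zsummand_nonneg hw _ k))]
    exact mul_le_mul_of_nonneg_left (zsummand_le_of_le hw hta μ2 k) (hc k)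
  simpa only [tsum_ite_fst_eq] using tendsto_tsum_of_dominated_convergence hs hlim hdom

end zsummand

/-- If `(a, μ₂) ∈ D_μ` for some `a`, then as `μ₁ → -∞`: `z(μ₁,μ₂)`
converges to `∑_{k₂} w(0,k₂) e^{μ₂ k₂}` (a finite positive number), `R₁(μ₁,μ₂) → 0`, and
`R₂(μ₁,μ₂)` converges to the corresponding single-line mean. -/
theorem statement7 (w : ℕ × ℕ → ℝ) (hw : ∀ k, 0 < w k) (a μ2 : ℝ)
    (h : (a, μ2) ∈ Dmu w) :
    Summable (fun j : ℕ => w (0, j) * Real.exp (μ2 * j)) ∧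
    0 < ∑' j : ℕ, w (0, j) * Real.exp (μ2 * j) ∧
    Tendsto (fun t : ℝ => zfun w (t, μ2)) atBot (𝓝 (∑' j : ℕ, w (0, j) * Real.exp (μ2 * j))) ∧
    Tendsto (fun t : ℝ => R1 w (t, μ2)) atBot (𝓝 0) ∧
    Tendsto (fun t : ℝ => R2 w (t, μ2)) atBot
      (𝓝 ((∑' j : ℕ, (j : ℝ) * w (0, j) * Real.exp (μ2 * j)) /
           (∑' j : ℕ, w (0, j) * Real.exp (μ2 * j)))) := by
  have hw0 : ∀ k, 0 ≤ w k := fun k => (hw k).le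
  have hz := summable_zsummand_of_mem_Dmu hw0 h
  have hline : Summable fun j : ℕ => w (0, j) * exp (μ2 * j) := by
    simpa [Function.comp_def, zsummand, dotNat] using hz.comp_injective (Prod.mk_right_injective 0)
  have hpos : 0 < ∑' j : ℕ, w (0, j) * exp (μ2 * j) :=
    hline.tsum_pos (fun j => (mul_pos (hw _) (exp_pos _)).le) 0 (mul_pos (hw _) (exp_pos _))
  have hZ : Tendsto (fun t : ℝ => zfun w (t, μ2)) atBot
      (𝓝 (∑' j : ℕ, w (0, j) * exp (μ2 * j))) := by
    simpa [zfun] using tendsto_tsum_mul_zsummand_atBot hw0 (c := 1) (fun _ => zero_le_one) (by simpa)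
  have hN1 := tendsto_tsum_mul_zsummand_atBot hw0 (fun k => Nat.cast_nonneg k.1) h.1
  have hN2 := tendsto_tsum_mul_zsummand_atBot hw0 (fun k => Nat.cast_nonneg k.2) h.2
  refine ⟨hline, hpos, hZ, ?_, ?_⟩
  · simpa [R1, tsum_mul_nu1, Pi.div_def] using hN1.div hZ hpos.ne'
  · simpa [R2, tsum_mul_nu1, Pi.div_def, mul_assoc] using hN2.div hZ hpos.ne'
end
end
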